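/- In the discrete Heisenberg group with standard generating set, every infinite subsequence of the sequence of balls {B_n} fails the Besicovitch covering property. -/

import Mathlib

open Finset Pointwise

/-- The discrete Heisenberg group, modeled as triples `(x, y, z)` of integers
corresponding to the upper unitriangular matrix `[[1, x, z], [0, 1, y], [0, 0, 1]]`. -/
structure Heis where
  x : ℤ
  y : ℤ
  z : ℤ
deriving DecidableEq

namespace Heis

instance : Mul Heis := ⟨fun p q => ⟨p.x + q.x, p.y + q.y, p.z + q.z + p.x * q.y⟩⟩
instance : One Heis := ⟨⟨0, 0, 0⟩⟩
instance : Inv Heis := ⟨fun p => ⟨-p.x, -p.y, -p.z + p.x * p.y⟩⟩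

lemma mul_def (p q : Heis) :
    p * q = ⟨p.x + q.x, p.y + q.y, p.z + q.z + p.x * q.y⟩ := rfl
lemma one_def : (1 : Heis) = ⟨0, 0, 0⟩ := rfl
lemma inv_def (p : Heis) : p⁻¹ = ⟨-p.x, -p.y, -p.z + p.x * p.y⟩ := rfl

instance : Group Heis where
  mul_assoc := by
    rintro ⟨ax, ay, az⟩ ⟨bx, by', bz⟩ ⟨cx, cy, cz⟩
    simp only [mul_def, Heis.mk.injEq]
    refine ⟨by ring, by ring, by ring⟩
  one_mul := by
    rintro ⟨x, y, z⟩
    simp only [mul_def, one_def, Heis.mk.injEq]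
    refine ⟨by ring, by ring, by ring⟩
  mul_one := by
    rintro ⟨x, y, z⟩
    simp only [mul_def, one_def, Heis.mk.injEq]
    refine ⟨by ring, by ring, by ring⟩
  inv_mul_cancel := by
    rintro ⟨x, y, z⟩
    show _ * _ = _
    simp only [mul_def, inv_def, one_def, Heis.mk.injEq]
    refine ⟨by ring, by ring, by ring⟩

/-- The generator `a` (adds 1 to the (1,2) entry). -/
def a : Heis := ⟨1, 0, 0⟩

/-- The generator `b` (adds 1 to the (2,3) entry). -/
def b : Heis := ⟨0, 1, 0⟩

/-- The central element `c = b⁻¹ * a⁻¹ * b * a`. -/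
def c : Heis := b⁻¹ * a⁻¹ * b * a

/-- The ball of radius `n` in the word metric with respect to the standard
generating set `{a, a⁻¹, b, b⁻¹}`: all products of at most `n` generators. -/
def ball (n : ℕ) : Finset Heis :=
  (insert (1 : Heis) {a, a⁻¹, b, b⁻¹} : Finset Heis) ^ n


/-- The Besicovitch covering property for a sequence of finite subsets of a group. -/
def IsBesicovitch (F : ℕ → Finset Heis) : Prop :=
  ∃ C : ℕ, ∀ (A : Finset Heis) (ν : Heis → ℕ), ∃ A' ⊆ A,
    (∀ x ∈ A, ∃ g ∈ A', x ∈ (F (ν g)).image (· * g)) ∧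
    ∀ h : Heis, (A'.filter (fun g => h ∈ (F (ν g)).image (· * g))).card ≤ C

/-!
For `g = (x, 0, z)` in the ball `B n` one has `16 |z| ≤ (n + |x|)²`, and the word
`b^w a^{-w} b^{-w} a^{w - 4(k+1)}` with `w ≈ r / 4 + k + 1` nearly attains this bound: it gives
points `P_k = (-4(k+1), 0, w²)` of `B r` close to its upper boundary.

Given `C`, pick radii `r_0, …, r_C` along the subsequence, each larger than the square of the
previous one, and centres `P_k` taken for `r_k`. Every ball `B r_k * P_k` contains `1`, but
`P_k ∉ B r_l * P_l` for `k ≠ l`: if `k < l`, then `P_k P_l⁻¹` has smaller `|x|` than `P_l⁻¹` at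
almost the same height, and if `k > l`, its height `≈ r_k² / 16` exceeds what `B r_l` allows. So
a covering subfamily must keep all `C + 1` balls, and `1` is covered `C + 1` times.
-/

attribute [ext] Heis

/-- The translates `F (ν g) * g`, `g ∈ A`, all contain `1` and none contains another centre. -/
def IsBesicovitchFamily (F : ℕ → Finset Heis) (A : Finset Heis) (ν : Heis → ℕ) : Prop :=
  (∀ g ∈ A, g⁻¹ ∈ F (ν g)) ∧ ∀ g ∈ A, ∀ g' ∈ A, g * g'⁻¹ ∈ F (ν g') → g = g'

theorem not_isBesicovitch_of_forall_exists_isBesicovitchFamily {F : ℕ → Finset Heis}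
    (h : ∀ C : ℕ, ∃ (A : Finset Heis) (ν : Heis → ℕ), C < #A ∧ IsBesicovitchFamily F A ν) :
    ¬ IsBesicovitch F := by
  rintro ⟨C, hC⟩
  obtain ⟨A, ν, hcard, hone, hsep⟩ := h C
  obtain ⟨A', hA'A, hcover, hmult⟩ := hC A ν
  have hA' : A ⊆ A' := by
    intro g hg
    obtain ⟨g', hg', hgg'⟩ := hcover g hg
    rw [image_mul_right, mem_preimage] at hgg'
    rwa [hsep g hg g' (hA'A hg') hgg']
  have hfilter : A ⊆ A'.filter (fun g => 1 ∈ (F (ν g)).image (· * g)) := fun g hg => by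
    rw [mem_filter, image_mul_right, mem_preimage, one_mul]
    exact ⟨hA' hg, hone g hg⟩
  exact absurd ((card_le_card hfilter).trans (hmult 1)) (not_le.2 hcard)

lemma exists_seq_le_apply_succ {n : ℕ → ℕ} (hn : ∀ m, ∃ i, m ≤ n i) (f : ℕ → ℕ) (m₀ : ℕ) :
    ∃ i : ℕ → ℕ, m₀ ≤ n (i 0) ∧ ∀ k, f (n (i k)) ≤ n (i (k + 1)) := by
  choose j hj using hn
  let i : ℕ → ℕ := fun k => Nat.rec (j m₀) (fun _ ik => j (f (n ik))) k
  exact ⟨i, hj m₀, fun k => hj _⟩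

@[simp] lemma mul_x (p q : Heis) : (p * q).x = p.x + q.x := rfl
@[simp] lemma mul_y (p q : Heis) : (p * q).y = p.y + q.y := rfl
@[simp] lemma mul_z (p q : Heis) : (p * q).z = p.z + q.z + p.x * q.y := rfl
@[simp] lemma inv_x (p : Heis) : p⁻¹.x = -p.x := rfl
@[simp] lemma inv_y (p : Heis) : p⁻¹.y = -p.y := rfl
@[simp] lemma inv_z (p : Heis) : p⁻¹.z = -p.z + p.x * p.y := rfl

def gens : Finset Heis := insert 1 {a, a⁻¹, b, b⁻¹}

lemma ball_eq_gens_pow (n : ℕ) : ball n = gens ^ n := rfl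

lemma mem_gens {s : Heis} : s ∈ gens ↔ s = 1 ∨ s = a ∨ s = a⁻¹ ∨ s = b ∨ s = b⁻¹ := by
  simp [gens]

lemma gens_inv : gens⁻¹ = gens := by
  ext s
  simp only [mem_inv', mem_gens, inv_eq_iff_eq_inv]
  tauto

lemma ball_mono {m n : ℕ} (h : m ≤ n) : ball m ⊆ ball n :=
  pow_subset_pow_right (mem_gens.2 (Or.inl rfl)) h

lemma mul_mem_ball {m n : ℕ} {g h : Heis} (hg : g ∈ ball m) (hh : h ∈ ball n) :
    g * h ∈ ball (m + n) := by
  rw [ball_eq_gens_pow, pow_add]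
  exact mul_mem_mul hg hh

lemma pow_mem_ball {s : Heis} (hs : s ∈ gens) (n : ℕ) : s ^ n ∈ ball n :=
  pow_mem_pow hs

lemma inv_mem_ball {n : ℕ} {g : Heis} (hg : g ∈ ball n) : g⁻¹ ∈ ball n := by
  rw [ball_eq_gens_pow, ← gens_inv, inv_pow, ← ball_eq_gens_pow]
  exact inv_mem_inv hg

lemma a_pow (m : ℕ) : a ^ m = ⟨m, 0, 0⟩ := by
  induction m with
  | zero => rfl
  | succ m ih => rw [pow_succ, ih]; ext <;> simp [a]

lemma b_pow (m : ℕ) : b ^ m = ⟨0, m, 0⟩ := by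
  induction m with
  | zero => rfl
  | succ m ih => rw [pow_succ, ih]; ext <;> simp [b]

def mirror : Heis →* Heis where
  toFun g := ⟨-g.x, g.y, -g.z⟩
  map_one' := rfl
  map_mul' p q := by ext <;> simp only [mul_x, mul_y, mul_z] <;> ring

lemma image_mirror_ball (n : ℕ) : (ball n).image mirror = ball n := by
  rw [ball_eq_gens_pow, image_pow]
  congr 1
  decide

/-- Read a word of length at most `n` for `g` as a walk whose abscissa stays in `[-L, X]` and
which uses `U` letters `b` and `D` letters `b⁻¹`. A letter `b` (resp. `b⁻¹`) read at abscissa `t`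
adds `t ≤ X` (resp. `-t ≤ L`) to `z`, and visiting both `X` and `-L` before ending at `x` takes
at least `2X + 2L - |x|` letters `a^{±1}`. -/
def AreaBound (n : ℕ) (g : Heis) : Prop :=
  ∃ X L U D : ℤ, 0 ≤ X ∧ 0 ≤ L ∧ 0 ≤ U ∧ 0 ≤ D ∧ g.x ≤ X ∧ -g.x ≤ L ∧ g.y = U - D ∧
    2 * X + 2 * L + U + D ≤ n + |g.x| ∧ g.z ≤ X * U + L * D

lemma AreaBound.mul_gen {n : ℕ} {g s : Heis} (h : AreaBound n g) (hs : s ∈ gens) :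
    AreaBound (n + 1) (g * s) := by
  obtain ⟨X, L, U, D, hX, hL, hU, hD, hxX, hxL, hy, hlen, hz⟩ := h
  rw [abs_eq_max_neg] at hlen
  rcases mem_gens.1 hs with rfl | rfl | rfl | rfl | rfl
  · refine ⟨X, L, U, D, ?_⟩
    simp only [mul_one, abs_eq_max_neg]
    push_cast
    omega
  · refine ⟨max X (g.x + 1), L, U, D, ?_⟩
    simp only [mul_x, mul_y, mul_z, a, add_zero, mul_zero, abs_eq_max_neg]
    push_cast
    refine ⟨by omega, hL, hU, hD, by omega, by omega, hy, by omega, ?_⟩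
    nlinarith [le_max_left X (g.x + 1)]
  · refine ⟨X, max L (1 - g.x), U, D, ?_⟩
    simp only [mul_x, mul_y, mul_z, inv_x, inv_y, inv_z, a, neg_zero, add_zero, mul_zero,
      abs_eq_max_neg]
    push_cast
    refine ⟨hX, by omega, hU, hD, by omega, by omega, hy, by omega, ?_⟩
    nlinarith [le_max_left L (1 - g.x)]
  · refine ⟨X, L, U + 1, D, ?_⟩
    simp only [mul_x, mul_y, mul_z, b, add_zero, mul_one, abs_eq_max_neg]
    push_cast
    refine ⟨hX, hL, by omega, hD, hxX, hxL, by omega, by omega, by nlinarith⟩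
  · refine ⟨X, L, U, D + 1, ?_⟩
    simp only [mul_x, mul_y, mul_z, inv_x, inv_y, inv_z, b, neg_zero, add_zero, abs_eq_max_neg]
    push_cast
    refine ⟨hX, hL, hU, by omega, hxX, hxL, by omega, by omega, by nlinarith⟩

lemma areaBound_of_mem_ball {n : ℕ} {g : Heis} (hg : g ∈ ball n) : AreaBound n g := by
  induction n generalizing g with
  | zero =>
    obtain rfl : g = 1 := by simpa [ball_eq_gens_pow] using hg
    exact ⟨0, 0, 0, 0, by simp [one_def]⟩
  | succ n ih =>
    rw [ball_eq_gens_pow, pow_succ] at hg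
    obtain ⟨p, hp, s, hs, rfl⟩ := mem_mul.1 hg
    exact (ih hp).mul_gen hs

lemma sixteen_mul_z_le_of_mem_ball {n : ℕ} {g : Heis} (hg : g ∈ ball n) (hy : g.y = 0) :
    16 * g.z ≤ (n + |g.x|) ^ 2 := by
  obtain ⟨X, L, U, D, hX, hL, hU, hD, -, -, hUD, hlen, hz⟩ := areaBound_of_mem_ball hg
  obtain rfl : D = U := by omega
  have hlen' : 2 * (X + L + D) ≤ n + |g.x| := by
    rcases abs_cases g.x with ⟨hx, -⟩ | ⟨hx, -⟩ <;> omega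
  nlinarith [sq_nonneg (X + L - D)]

lemma sixteen_mul_abs_z_le_of_mem_ball {n : ℕ} {g : Heis} (hg : g ∈ ball n) (hy : g.y = 0) :
    16 * |g.z| ≤ (n + |g.x|) ^ 2 := by
  have hmirror : mirror g ∈ ball n := image_mirror_ball n ▸ mem_image_of_mem mirror hg
  have h₁ := sixteen_mul_z_le_of_mem_ball hg hy
  have h₂ := sixteen_mul_z_le_of_mem_ball hmirror hy
  simp only [mirror, MonoidHom.coe_mk, OneHom.coe_mk, abs_neg] at h₂
  rcases abs_cases g.z with ⟨hz, -⟩ | ⟨hz, -⟩ <;> rw [hz] <;> linarith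

/-- The value of the word `b^w a^{-w} b^{-w} a^{w - 4(k+1)}` with `w = r / 4 + k + 1`, of length
at most `r`. -/
def tallPoint (r k : ℕ) : Heis := ⟨-(4 * (k + 1)), 0, ((r / 4 + k + 1 : ℕ) : ℤ) ^ 2⟩

lemma tallPoint_mem_ball {r k : ℕ} (h : 12 * (k + 1) ≤ r) : tallPoint r k ∈ ball r := by
  set w := r / 4 + k + 1 with hw
  have hword : b ^ w * (a ^ w)⁻¹ * (b ^ w)⁻¹ * a ^ (w - 4 * (k + 1)) = tallPoint r k := by
    ext <;> simp [a_pow, b_pow, tallPoint, ← hw, sq]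
    omega
  have ha : a ∈ gens := mem_gens.2 (by simp)
  have hb : b ∈ gens := mem_gens.2 (by simp)
  have hmem := mul_mem_ball (mul_mem_ball (mul_mem_ball (pow_mem_ball hb w)
    (inv_mem_ball (pow_mem_ball ha w))) (inv_mem_ball (pow_mem_ball hb w)))
    (pow_mem_ball ha (w - 4 * (k + 1)))
  exact hword ▸ ball_mono (by omega) hmem

lemma tallPoint_mul_inv (r r' k l : ℕ) : tallPoint r k * (tallPoint r' l)⁻¹ =
    ⟨4 * ((l : ℤ) - k), 0, ((r / 4 + k + 1 : ℕ) : ℤ) ^ 2 - ((r' / 4 + l + 1 : ℕ) : ℤ) ^ 2⟩ := by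
  ext <;> simp [tallPoint] <;> ring

lemma tallPoint_mul_inv_notMem_ball_of_lt {r r' k l : ℕ} (hkl : k < l)
    (hr : (r + 4 * (k + 1)) ^ 2 ≤ r') : tallPoint r k * (tallPoint r' l)⁻¹ ∉ ball r' := by
  intro hmem
  have hbound := sixteen_mul_abs_z_le_of_mem_ball hmem (by rw [tallPoint_mul_inv])
  rw [tallPoint_mul_inv, abs_of_nonneg (a := 4 * ((l : ℤ) - k)) (by omega)] at hbound
  have hw : 4 * ((r / 4 + k + 1 : ℕ) : ℤ) ≤ r + 4 * (k + 1) := by omega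
  have hw' : (r' : ℤ) + 4 * l + 1 ≤ 4 * ((r' / 4 + l + 1 : ℕ) : ℤ) := by omega
  have hr' : ((r : ℤ) + 4 * (k + 1)) ^ 2 ≤ r' := by exact_mod_cast hr
  nlinarith [neg_abs_le (((r / 4 + k + 1 : ℕ) : ℤ) ^ 2 - ((r' / 4 + l + 1 : ℕ) : ℤ) ^ 2)]

lemma tallPoint_mul_inv_notMem_ball_of_gt {r r' k l : ℕ} (hlk : l < k)
    (hr : (r' + 4 * (k + 1)) ^ 2 ≤ r) : tallPoint r k * (tallPoint r' l)⁻¹ ∉ ball r' := by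
  intro hmem
  have hbound := sixteen_mul_abs_z_le_of_mem_ball hmem (by rw [tallPoint_mul_inv])
  rw [tallPoint_mul_inv, abs_of_nonpos (a := 4 * ((l : ℤ) - k)) (by omega)] at hbound
  have hw : (r : ℤ) + 4 * k + 1 ≤ 4 * ((r / 4 + k + 1 : ℕ) : ℤ) := by omega
  have hw' : 4 * ((r' / 4 + l + 1 : ℕ) : ℤ) ≤ r' + 4 * k := by omega
  have hr' : ((r' : ℤ) + 4 * (k + 1)) ^ 2 ≤ r := by exact_mod_cast hr
  nlinarith [le_abs_self (((r / 4 + k + 1 : ℕ) : ℤ) ^ 2 - ((r' / 4 + l + 1 : ℕ) : ℤ) ^ 2)]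

lemma exists_isBesicovitchFamily_ball (N : ℕ) (R : ℕ → ℕ) (h0 : 12 * N ≤ R 0)
    (hR : ∀ k, (R k + 4 * N) ^ 2 ≤ R (k + 1)) :
    ∃ (A : Finset Heis) (ρ : Heis → ℕ),
      #A = N ∧ IsBesicovitchFamily (fun k => ball (R k)) A ρ := by
  have hmono : Monotone R := monotone_nat_of_le_succ fun k =>
    ((Nat.le_add_right _ _).trans (Nat.le_self_pow two_ne_zero _)).trans (hR k)
  have hgrow : ∀ k l, k < l → (R k + 4 * N) ^ 2 ≤ R l := fun k l hkl => (hR k).trans (hmono hkl)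
  set P : ℕ → Heis := fun k => tallPoint (R k) k
  set ρ : Heis → ℕ := fun g => (-g.x / 4 - 1).toNat
  have hρ : Function.LeftInverse ρ P := fun k => by simp [ρ, P, tallPoint]
  refine ⟨(range N).image P, ρ, ?_, ?_, ?_⟩
  · rw [card_image_of_injective _ hρ.injective, card_range]
  · simp only [mem_image, mem_range, forall_exists_index, and_imp]
    rintro _ k hk rfl
    rw [hρ]
    exact inv_mem_ball (tallPoint_mem_ball (by linarith [hmono (Nat.zero_le k)]))
  · simp only [mem_image, mem_range, forall_exists_index, and_imp]
    rintro _ k hk rfl _ l hl rfl hmem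
    rw [hρ] at hmem
    rcases lt_trichotomy k l with hkl | rfl | hlk
    · exact absurd hmem (tallPoint_mul_inv_notMem_ball_of_lt hkl
        ((Nat.pow_le_pow_left (by omega) 2).trans (hgrow k l hkl)))
    · rfl
    · exact absurd hmem (tallPoint_mul_inv_notMem_ball_of_gt hlk
        ((Nat.pow_le_pow_left (by omega) 2).trans (hgrow l k hlk)))

/-- In the discrete Heisenberg group with the standard generating set, every
infinite subsequence of the sequence of balls fails the Besicovitch covering
property. -/
theorem heisenberg_balls_not_besicovitch :
    ∀ n : ℕ → ℕ, StrictMono n → ¬ IsBesicovitch (fun i => ball (n i)) := by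
  intro n hn
  refine not_isBesicovitch_of_forall_exists_isBesicovitchFamily fun C => ?_
  obtain ⟨i, hi0, hi⟩ := exists_seq_le_apply_succ (fun m => ⟨m, hn.le_apply⟩)
    (fun m => (m + 4 * (C + 1)) ^ 2) (12 * (C + 1))
  obtain ⟨A, ρ, hcard, hA⟩ := exists_isBesicovitchFamily_ball (C + 1) (n ∘ i) hi0 hi
  exact ⟨A, i ∘ ρ, hcard ▸ lt_add_one C, hA⟩

end Heis
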